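/- The complement of a connected bipartite graph is vertex decomposable (its independence complex is vertex decomposable). -/

import Mathlib

open SimpleGraph

variable {V : Type*}

/-- `S` is an independent set of `G`: no two (distinct) members are adjacent. -/
def IsIndepOn (G : SimpleGraph V) (S : Set V) : Prop :=
  S.Pairwise fun u w => ¬ G.Adj u w

/-- The closed neighborhood `N_G[v]` of `v` in `G`. -/
def closedNbhd (G : SimpleGraph V) (v : V) : Set V :=
  {u | G.Adj v u} ∪ {v}

/-- Vertex decomposability of the independence complex of the induced subgraph of `G`
on the vertex set `A`. -/
inductive VertexDecomp (G : SimpleGraph V) : Set V → Prop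
  | discrete (A : Set V) (h : ∀ u ∈ A, ∀ w ∈ A, ¬ G.Adj u w) : VertexDecomp G A
  | shed (A : Set V) (v : V) (hv : v ∈ A)
      (hshed : ∀ S : Set V, S ⊆ A \ closedNbhd G v → IsIndepOn G S →
        ∃ x ∈ A, G.Adj v x ∧ IsIndepOn G (insert x S))
      (hdel : VertexDecomp G (A \ {v}))
      (hlink : VertexDecomp G (A \ closedNbhd G v)) : VertexDecomp G A

/-- `v` is a shedding vertex of `H`: every independent set avoiding `N_H[v]` can be
extended by a neighbor of `v` to an independent set of `H \ {v}`. -/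
def IsSheddingVertex (H : SimpleGraph V) (v : V) : Prop :=
  ∀ S : Set V, S ∩ closedNbhd H v = ∅ → IsIndepOn H S →
    ∃ x, H.Adj v x ∧ IsIndepOn H (insert x S)

/-! If `G` is triangle-free and `G[A]` is connected, shed a vertex `v` whose removal keeps
`G[A]` connected (a leaf of a spanning tree). The link of `v` in the independence complex of
`Gᶜ[A]` is spanned by the `G`-neighbours of `v` in `A`, which form a clique of `Gᶜ`, and the
complex of a clique is a set of points. The faces to extend in the shedding condition are
`G`-cliques among those neighbours, so they are empty or a single vertex `s`; connectivity of
`G[A] - v` supplies a `G`-neighbour of `s` (or, for the empty face, a non-neighbour of `v`), and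
triangle-freeness makes it a non-neighbour of `v`. -/

section

variable {G : SimpleGraph V}

lemma isIndepOn_compl_iff {S : Set V} : IsIndepOn Gᶜ S ↔ G.IsClique S := by
  simp only [IsIndepOn, isClique_iff, Set.Pairwise, compl_adj, not_and, not_not]
  exact forall₄_congr fun _ _ _ _ => ⟨fun h huw => h huw huw, fun h huw _ => h huw⟩

lemma mem_diff_closedNbhd_compl {A : Set V} {v u : V} :
    u ∈ A \ closedNbhd Gᶜ v ↔ u ∈ A ∧ G.Adj v u := by
  simp only [closedNbhd, Set.mem_sdiff, Set.mem_union, Set.mem_ofPred_eq, Set.mem_singleton_iff,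
    compl_adj, not_or, not_and, not_not]
  exact and_congr_right fun _ => ⟨fun h => h.1 (Ne.symm h.2), fun h => ⟨fun _ => h, h.ne'⟩⟩

lemma not_adj_of_cliqueFree_three (hG : G.CliqueFree 3) {v x y : V}
    (hx : G.Adj v x) (hy : G.Adj v y) : ¬ G.Adj x y := fun hxy =>
  isIndepSet_neighborSet_of_triangleFree _ hG v hx hy hxy.ne hxy

lemma exists_adj_of_preconnected_induce {A : Set V}
    (hA : (G.induce A).Preconnected) {u w : V} (hu : u ∈ A) (hw : w ∈ A) (huw : u ≠ w) :
    ∃ x ∈ A, G.Adj u x := by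
  obtain ⟨p⟩ := hA ⟨u, hu⟩ ⟨w, hw⟩
  exact ⟨_, p.snd.2, p.adj_snd (Walk.not_nil_of_ne fun h => huw (congrArg Subtype.val h))⟩

lemma exists_preconnected_induce_diff_singleton [Finite V] {A : Set V}
    (hA : (G.induce A).Connected) : ∃ v ∈ A, (G.induce (A \ {v})).Preconnected := by
  obtain ⟨⟨v, hv⟩, hpre⟩ := hA.exists_preconnected_induce_compl_singleton_of_finite
  let f : (G.induce A).induce {⟨v, hv⟩}ᶜ →g G.induce (A \ {v}) :=
    { toFun := fun x => ⟨x.1.1, x.1.2, fun h => x.2 (Subtype.ext h)⟩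
      map_rel' := id }
  exact ⟨v, hv, hpre.map f fun y =>
    ⟨⟨⟨y.1, y.2.1⟩, fun h => y.2.2 (congrArg Subtype.val h)⟩, rfl⟩⟩

lemma VertexDecomp.of_isClique {H : SimpleGraph V} {A : Set V} (hfin : A.Finite)
    (hA : H.IsClique A) : VertexDecomp H A := by
  induction A, hfin using Set.Finite.induction_on with
  | empty => exact .discrete ∅ (by simp)
  | @insert v A hvA _ ih =>
    obtain rfl | ⟨w, hw⟩ := A.eq_empty_or_nonempty
    · exact .discrete _ (by simp)
    have hlink : insert v A \ closedNbhd H v = ∅ := by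
      ext u
      simp only [closedNbhd, Set.mem_sdiff, Set.mem_union, Set.mem_ofPred_eq,
        Set.mem_singleton_iff, Set.mem_empty_iff_false, iff_false, not_and, not_or, not_not]
      exact fun hu => not_imp_comm.mp (hA (Set.mem_insert v A) hu ∘ Ne.symm)
    refine .shed _ v (Set.mem_insert v A) ?_ ?_ ?_
    · intro S hS _
      rw [hlink, Set.subset_empty_iff] at hS
      subst hS
      exact ⟨w, Set.mem_insert_of_mem v hw,
        hA (Set.mem_insert v A) (Set.mem_insert_of_mem v hw) (ne_of_mem_of_not_mem hw hvA).symm,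
        by simp [IsIndepOn]⟩
    · rw [Set.insert_sdiff_self_of_notMem hvA]
      exact ih (hA.subset (Set.subset_insert v A))
    · rw [hlink]
      exact .discrete ∅ (by simp)

lemma exists_compl_adj_isClique_insert (hG : G.CliqueFree 3) {A S : Set V}
    {v a b : V} (hv : v ∈ A) (hdel : (G.induce (A \ {v})).Preconnected) (ha : a ∈ A) (hb : b ∈ A)
    (hab : Gᶜ.Adj a b) (hS : ∀ s ∈ S, s ∈ A ∧ G.Adj v s) (hSc : G.IsClique S) :
    ∃ x ∈ A, Gᶜ.Adj v x ∧ G.IsClique (insert x S) := by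
  obtain ⟨hne, hnab⟩ := (compl_adj _ _ _).mp hab
  obtain rfl | ⟨s, hs⟩ := S.eq_empty_or_nonempty
  · by_contra! hall
    have hvx : ∀ x ∈ A, x ≠ v → G.Adj v x := fun x hx hxv => by
      by_contra hvx
      exact hall x hx ((compl_adj _ _ _).mpr ⟨hxv.symm, hvx⟩) (by simp)
    have hav : a ≠ v := by rintro rfl; exact hnab (hvx b hb hne.symm)
    have hbv : b ≠ v := by rintro rfl; exact hnab (hvx a ha hne).symm
    obtain ⟨y, hy, hay⟩ := exists_adj_of_preconnected_induce hdel ⟨ha, hav⟩ ⟨hb, hbv⟩ hne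
    exact not_adj_of_cliqueFree_three hG (hvx a ha hav) (hvx y hy.1 hy.2) hay
  · obtain ⟨hsA, hvs⟩ := hS s hs
    have hSs : S ⊆ {s} := fun t ht => by
      by_contra hts
      exact not_adj_of_cliqueFree_three hG (hS t ht).2 hvs (hSc ht hs hts)
    obtain ⟨t, ht, hts⟩ : ∃ t ∈ A \ {v}, t ≠ s := by
      by_contra! h
      have hAvs : ∀ t ∈ A, t = v ∨ t = s := fun t ht =>
        (eq_or_ne t v).imp_right fun htv => h t ⟨ht, htv⟩
      rcases hAvs a ha with rfl | rfl <;> rcases hAvs b hb with rfl | rfl <;>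
        first | exact hne rfl | exact hnab hvs | exact hnab hvs.symm
    obtain ⟨x, hx, hsx⟩ := exists_adj_of_preconnected_induce hdel ⟨hsA, hvs.ne'⟩ ht hts.symm
    have hvx : ¬ G.Adj v x := not_adj_of_cliqueFree_three hG hvs.symm hsx
    refine ⟨x, hx.1, (compl_adj _ _ _).mpr ⟨Ne.symm hx.2, hvx⟩, ?_⟩
    exact (isClique_pair.mpr fun _ => hsx.symm).subset (Set.insert_subset_insert hSs)

theorem vertexDecomp_compl_of_cliqueFree_three [Finite V]
    (hG : G.CliqueFree 3) (A : Set V) (hA : (G.induce A).Preconnected) : VertexDecomp Gᶜ A := by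
  induction A using WellFoundedLT.induction with
  | ind A ih =>
  by_cases hdisc : ∀ u ∈ A, ∀ w ∈ A, ¬ Gᶜ.Adj u w
  · exact .discrete A hdisc
  push Not at hdisc
  obtain ⟨a, ha, b, hb, hab⟩ := hdisc
  have : Nonempty A := ⟨⟨a, ha⟩⟩
  obtain ⟨v, hv, hdel⟩ := exists_preconnected_induce_diff_singleton ⟨hA⟩
  refine .shed A v hv ?_ (ih _ (Set.sdiff_singleton_ssubset.2 hv) hdel) ?_
  · intro S hS hSind
    obtain ⟨x, hx, hvx, hxS⟩ := exists_compl_adj_isClique_insert hG hv hdel ha hb hab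
      (fun s hs => mem_diff_closedNbhd_compl.mp (hS hs)) (isIndepOn_compl_iff.mp hSind)
    exact ⟨x, hx, hvx, isIndepOn_compl_iff.mpr hxS⟩
  · refine .of_isClique (Set.toFinite _) fun u hu w hw huw => (compl_adj _ _ _).mpr ⟨huw, ?_⟩
    rw [mem_diff_closedNbhd_compl] at hu hw
    exact not_adj_of_cliqueFree_three hG hu.2 hw.2

lemma cliqueFree_three_of_bipartition {V1 V2 : Set V} (hdisj : Disjoint V1 V2)
    (hbip : ∀ u w, G.Adj u w → (u ∈ V1 ∧ w ∈ V2) ∨ (u ∈ V2 ∧ w ∈ V1)) : G.CliqueFree 3 := by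
  classical
  let c : G.Coloring Bool := Coloring.mk (fun v => decide (v ∈ V1)) fun {u w} huw => by
    rcases hbip u w huw with ⟨hu, hw⟩ | ⟨hu, hw⟩
    · simp [hu, Set.disjoint_right.mp hdisj hw]
    · simp [hw, Set.disjoint_right.mp hdisj hu]
  exact c.colorable.cliqueFree (by simp)

end

theorem complement_of_connected_bipartite_vertexDecomposable_general {V : Type*} [Fintype V]
    (G : SimpleGraph V) (V1 V2 : Set V)
    (hdisj : Disjoint V1 V2)
    (hbip : ∀ u w, G.Adj u w → (u ∈ V1 ∧ w ∈ V2) ∨ (u ∈ V2 ∧ w ∈ V1))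
    (hconn : G.Connected) :
    VertexDecomp Gᶜ Set.univ :=
  vertexDecomp_compl_of_cliqueFree_three (cliqueFree_three_of_bipartition hdisj hbip) _
    ((induceUnivIso G).preconnected_iff.mpr hconn.preconnected)

theorem complement_of_connected_bipartite_vertexDecomposable {V : Type*} [Fintype V]
    (G : SimpleGraph V) (V1 V2 : Set V)
    (hunion : V1 ∪ V2 = Set.univ) (hdisj : Disjoint V1 V2)
    (hbip : ∀ u w, G.Adj u w → (u ∈ V1 ∧ w ∈ V2) ∨ (u ∈ V2 ∧ w ∈ V1))
    (hconn : G.Connected) :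
    VertexDecomp Gᶜ Set.univ :=
  complement_of_connected_bipartite_vertexDecomposable_general G V1 V2 hdisj hbip hconn
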